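/- arXiv:2309.01459 — 2 statements merged into one kernel-verified Lean document; each statement's English description precedes it below -/
import Mathlib

section
/- The entropy density of f₆, namely ρs = −k_b ∫∫ f₆ ln(f₆/I^{δ/2−1}) dC dI, equals (up to an additive function of constants m, δ, k_b independent of ρ, θ_tr, θ_in) k_b·ρ/m·[ (3/2)ln θ_tr + (δ/2)ln θ_in − ln ρ ]. -/
/-!
Since `log (f₆ / I ^ (δ/2 - 1))` is affine in `‖C‖²` and `I`, the entropy integral only involves
the mass of `f₆` and its two moments `∫ ‖C‖² f₆ = 3 θ_tr ρ/m` and `∫ I f₆ = (δ/2) θ_in ρ/m`.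
The Gamma moment is the recursion `Γ(a + 1) = a Γ(a)`; the Gaussian moment in dimension `n`
follows from polar coordinates, where the same recursion turns `∫ r^(n+1) e^(-b r²)` into
`n / (2b) · ∫ r^(n-1) e^(-b r²)`.
-/

open MeasureTheory Real Set Module

section GammaMoments

variable {a θ : ℝ}

lemma integral_rpow_mul_exp_neg_div_Ioi (ha : 0 < a) (hθ : 0 < θ) :
    ∫ I in Ioi 0, I ^ (a - 1) * exp (-I / θ) = Gamma a * θ ^ a := by
  have h := integral_rpow_mul_exp_neg_mul_Ioi ha (inv_pos.2 hθ)
  simp_rw [one_div, inv_inv, ← div_eq_inv_mul, ← neg_div] at h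
  rw [h, mul_comm]

lemma integrableOn_rpow_mul_exp_neg_div_Ioi (ha : 0 < a) (hθ : 0 < θ) :
    IntegrableOn (fun I ↦ I ^ (a - 1) * exp (-I / θ)) (Ioi 0) :=
  .of_integral_ne_zero <| by
    rw [integral_rpow_mul_exp_neg_div_Ioi ha hθ]
    exact (mul_pos (Gamma_pos_of_pos ha) (rpow_pos_of_pos hθ _)).ne'

lemma integral_rpow_mul_exp_neg_div_mul_affine (ha : 0 < a) (hθ : 0 < θ) (c₀ c₁ : ℝ) :
    ∫ I in Ioi 0, I ^ (a - 1) * exp (-I / θ) * (c₀ + c₁ * I)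
      = Gamma a * θ ^ a * (c₀ + c₁ * (a * θ)) := by
  have ha' : 0 < a + 1 := by linarith
  have hsplit : ∀ I ∈ Ioi (0 : ℝ), I ^ (a - 1) * exp (-I / θ) * (c₀ + c₁ * I)
      = c₀ * (I ^ (a - 1) * exp (-I / θ)) + c₁ * (I ^ (a + 1 - 1) * exp (-I / θ)) := by
    intro I (hI : 0 < I)
    rw [add_sub_cancel_right, rpow_sub_one hI.ne']
    field_simp
  rw [setIntegral_congr_fun measurableSet_Ioi hsplit,
    integral_add ((integrableOn_rpow_mul_exp_neg_div_Ioi ha hθ).const_mul _)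
      ((integrableOn_rpow_mul_exp_neg_div_Ioi ha' hθ).const_mul _),
    integral_const_mul, integral_const_mul, integral_rpow_mul_exp_neg_div_Ioi ha hθ,
    integral_rpow_mul_exp_neg_div_Ioi ha' hθ, Gamma_add_one ha.ne', rpow_add_one hθ.ne']
  ring

end GammaMoments

section GaussianMoments

variable {q b : ℝ}

lemma integral_rpow_mul_exp_neg_mul_sq_Ioi (hq : -1 < q) (hb : 0 < b) :
    ∫ y in Ioi 0, y ^ q * exp (-b * y ^ 2)
      = b ^ (-(q + 1) / 2) * (1 / 2) * Gamma ((q + 1) / 2) := by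
  simpa only [rpow_two] using integral_rpow_mul_exp_neg_mul_rpow two_pos hq hb

lemma integral_rpow_mul_sq_mul_exp_neg_mul_sq_Ioi (hq : -1 < q) (hb : 0 < b) :
    ∫ y in Ioi 0, y ^ q * (y ^ 2 * exp (-b * y ^ 2))
      = (q + 1) / (2 * b) * ∫ y in Ioi 0, y ^ q * exp (-b * y ^ 2) := by
  have hshift : ∀ y ∈ Ioi (0 : ℝ), y ^ q * (y ^ 2 * exp (-b * y ^ 2))
      = y ^ (q + 2) * exp (-b * y ^ 2) := by
    intro y hy
    rw [rpow_add hy, rpow_two, mul_assoc]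
  rw [setIntegral_congr_fun measurableSet_Ioi hshift,
    integral_rpow_mul_exp_neg_mul_sq_Ioi (by linarith) hb,
    integral_rpow_mul_exp_neg_mul_sq_Ioi hq hb,
    show (q + 2 + 1) / 2 = (q + 1) / 2 + 1 by ring, Gamma_add_one (by linarith),
    show -(q + 2 + 1) / 2 = -(q + 1) / 2 + (-1) by ring, rpow_add hb, rpow_neg_one]
  field_simp

variable {E : Type*} [NormedAddCommGroup E] [InnerProductSpace ℝ E] [FiniteDimensional ℝ E]
  [MeasurableSpace E] [BorelSpace E] [Nontrivial E]

lemma integral_norm_sq_mul_exp_neg_mul_sq_norm (hb : 0 < b) :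
    ∫ v : E, ‖v‖ ^ 2 * exp (-b * ‖v‖ ^ 2)
      = finrank ℝ E / (2 * b) * ∫ v : E, exp (-b * ‖v‖ ^ 2) := by
  have hrpow : ∀ f : ℝ → ℝ, ∫ y in Ioi (0 : ℝ), y ^ (finrank ℝ E - 1) • f y
      = ∫ y in Ioi (0 : ℝ), y ^ ((finrank ℝ E : ℝ) - 1) * f y := by
    intro f
    refine setIntegral_congr_fun measurableSet_Ioi fun y _ ↦ ?_
    rw [smul_eq_mul, ← Nat.cast_pred finrank_pos, rpow_natCast]
  have hn : (0 : ℝ) < finrank ℝ E := Nat.cast_pos.2 finrank_pos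
  rw [integral_fun_norm_addHaar volume (fun y ↦ y ^ 2 * exp (-b * y ^ 2)),
    integral_fun_norm_addHaar volume (fun y ↦ exp (-b * y ^ 2)), hrpow, hrpow,
    integral_rpow_mul_sq_mul_exp_neg_mul_sq_Ioi (by linarith) hb]
  simp only [nsmul_eq_mul, smul_eq_mul, sub_add_cancel]
  ring

lemma integral_exp_neg_mul_sq_norm_mul_affine (hb : 0 < b) (c₀ c₁ : ℝ) :
    ∫ v : E, exp (-b * ‖v‖ ^ 2) * (c₀ + c₁ * ‖v‖ ^ 2)
      = (π / b) ^ (finrank ℝ E / 2 : ℝ) * (c₀ + c₁ * (finrank ℝ E / (2 * b))) := by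
  have hpos : 0 < (π / b) ^ (finrank ℝ E / 2 : ℝ) := rpow_pos_of_pos (div_pos pi_pos hb) _
  have hexp : Integrable fun v : E ↦ exp (-b * ‖v‖ ^ 2) := .of_integral_ne_zero <| by
    rw [GaussianFourier.integral_rexp_neg_mul_sq_norm hb]; exact hpos.ne'
  have hsq : Integrable fun v : E ↦ ‖v‖ ^ 2 * exp (-b * ‖v‖ ^ 2) := .of_integral_ne_zero <| by
    rw [integral_norm_sq_mul_exp_neg_mul_sq_norm hb,
      GaussianFourier.integral_rexp_neg_mul_sq_norm hb]
    have : (0 : ℝ) < finrank ℝ E := Nat.cast_pos.2 finrank_pos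
    positivity
  have hsplit : ∀ v : E, exp (-b * ‖v‖ ^ 2) * (c₀ + c₁ * ‖v‖ ^ 2)
      = exp (-b * ‖v‖ ^ 2) * c₀ + c₁ * (‖v‖ ^ 2 * exp (-b * ‖v‖ ^ 2)) := fun v ↦ by ring
  simp_rw [hsplit]
  rw [integral_add (hexp.mul_const _) (hsq.const_mul _), integral_mul_const, integral_const_mul,
    integral_norm_sq_mul_exp_neg_mul_sq_norm hb, GaussianFourier.integral_rexp_neg_mul_sq_norm hb]
  ring

lemma integral_exp_neg_sq_norm_div_mul_affine {s : ℝ} (hs : 0 < s) (c₀ c₁ : ℝ) :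
    ∫ v : E, exp (-‖v‖ ^ 2 / (2 * s)) * (c₀ + c₁ * ‖v‖ ^ 2)
      = (2 * π * s) ^ (finrank ℝ E / 2 : ℝ) * (c₀ + c₁ * (finrank ℝ E * s)) := by
  have hb : 0 < (2 * s)⁻¹ := by positivity
  simp_rw [neg_div, div_eq_inv_mul, ← neg_mul]
  rw [integral_exp_neg_mul_sq_norm_mul_affine hb]
  field_simp

end GaussianMoments

/-- `f₆` with `N = ρ/m`, `s = θ_tr`, `θ = θ_in`, `a = δ/2`, in velocity-space dimension
`finrank ℝ E`. -/
noncomputable def maxwellGammaDensity {E : Type*} [NormedAddCommGroup E] [InnerProductSpace ℝ E]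
    (N s θ a : ℝ) (C : E) (I : ℝ) : ℝ :=
  N * (2 * π * s) ^ (-(finrank ℝ E : ℝ) / 2) * exp (-‖C‖ ^ 2 / (2 * s)) * (1 / Gamma a) *
    I ^ (a - 1) * θ ^ (-a) * exp (-I / θ)

lemma log_mul_exp_mul_exp {K : ℝ} (hK : 0 < K) (u w : ℝ) :
    log (K * exp u * exp w) = log K + u + w := by
  rw [log_mul (by positivity) (exp_pos w).ne', log_mul hK.ne' (exp_pos u).ne', log_exp, log_exp]

section Entropy

variable {E : Type*} [NormedAddCommGroup E] [InnerProductSpace ℝ E] [FiniteDimensional ℝ E]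
  [MeasurableSpace E] [BorelSpace E] [Nontrivial E]

theorem integral_integral_mul_log_maxwellGammaDensity {N s θ a : ℝ} (hN : 0 < N) (hs : 0 < s)
    (hθ : 0 < θ) (ha : 0 < a) :
    ∫ C : E, ∫ I in Ioi 0, maxwellGammaDensity N s θ a C I *
        log (maxwellGammaDensity N s θ a C I / I ^ (a - 1))
      = N * (log N - finrank ℝ E / 2 * log (2 * π * s) - log (Gamma a) - a * log θ
          - finrank ℝ E / 2 - a) := by
  set n : ℝ := (finrank ℝ E : ℝ)
  set K := N * (2 * π * s) ^ (-n / 2) * (1 / Gamma a) * θ ^ (-a)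
  have hΓ : 0 < Gamma a := Gamma_pos_of_pos ha
  have hK : 0 < K := by positivity
  have hpoint (C : E) (I : ℝ) (hI : I ∈ Ioi 0) :
      maxwellGammaDensity N s θ a C I * log (maxwellGammaDensity N s θ a C I / I ^ (a - 1))
        = I ^ (a - 1) * exp (-I / θ) * (K * exp (-‖C‖ ^ 2 / (2 * s)) *
            (log K - ‖C‖ ^ 2 / (2 * s)) + -(K * exp (-‖C‖ ^ 2 / (2 * s)) / θ) * I) := by
    have hf : maxwellGammaDensity N s θ a C I
        = K * exp (-‖C‖ ^ 2 / (2 * s)) * exp (-I / θ) * I ^ (a - 1) := by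
      unfold maxwellGammaDensity; ring
    rw [hf, mul_div_cancel_right₀ _ (rpow_pos_of_pos hI _).ne', log_mul_exp_mul_exp hK]
    ring
  have hinner (C : E) : ∫ I in Ioi 0, maxwellGammaDensity N s θ a C I *
      log (maxwellGammaDensity N s θ a C I / I ^ (a - 1))
        = K * Gamma a * θ ^ a *
          (exp (-‖C‖ ^ 2 / (2 * s)) * (log K - a + -(2 * s)⁻¹ * ‖C‖ ^ 2)) := by
    rw [setIntegral_congr_fun measurableSet_Ioi (hpoint C),
      integral_rpow_mul_exp_neg_div_mul_affine ha hθ]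
    field_simp
    ring
  have h2πs : 0 < 2 * π * s := by positivity
  have hmass : K * Gamma a * θ ^ a * (2 * π * s) ^ (n / 2) = N := by
    simp only [K, neg_div, rpow_neg h2πs.le, rpow_neg hθ.le]
    field_simp
  have hlogK : log K = log N - n / 2 * log (2 * π * s) - log (Gamma a) - a * log θ := by
    rw [log_mul (by positivity) (by positivity), log_mul (by positivity) (by positivity),
      log_mul hN.ne' (by positivity), log_rpow h2πs, log_rpow hθ, one_div, log_inv]
    ring
  simp_rw [hinner]
  rw [integral_const_mul, integral_exp_neg_sq_norm_div_mul_affine hs, ← mul_assoc, hmass, hlogK]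
  field_simp
  ring

end Entropy

theorem f6_entropy_density_general (m δ kb : ℝ) (hm : 0 < m) (hδ : 0 < δ) :
    ∃ c : ℝ, ∀ ρ θtr θin : ℝ, 0 < ρ → 0 < θtr → 0 < θin →
      (-kb * ∫ C : EuclideanSpace ℝ (Fin 3), ∫ I in Set.Ioi (0 : ℝ),
          (ρ / m * (2 * Real.pi * θtr) ^ (-(3 : ℝ) / 2) * Real.exp (-‖C‖ ^ 2 / (2 * θtr)) *
            (1 / Real.Gamma (δ / 2)) * I ^ (δ / 2 - 1) * θin ^ (-(δ / 2)) * Real.exp (-I / θin)) *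
          Real.log ((ρ / m * (2 * Real.pi * θtr) ^ (-(3 : ℝ) / 2) *
            Real.exp (-‖C‖ ^ 2 / (2 * θtr)) * (1 / Real.Gamma (δ / 2)) * I ^ (δ / 2 - 1) *
            θin ^ (-(δ / 2)) * Real.exp (-I / θin)) / I ^ (δ / 2 - 1)))
      = kb * ρ / m *
          (3 / 2 * Real.log θtr + δ / 2 * Real.log θin - Real.log ρ + c) := by
  refine ⟨log m + 3 / 2 * log (2 * π) + log (Gamma (δ / 2)) + 3 / 2 + δ / 2,
    fun ρ θtr θin hρ hθtr hθin ↦ ?_⟩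
  have h := integral_integral_mul_log_maxwellGammaDensity (E := EuclideanSpace ℝ (Fin 3))
    (div_pos hρ hm) hθtr hθin (half_pos hδ)
  simp only [maxwellGammaDensity, finrank_euclideanSpace_fin, Nat.cast_ofNat] at h
  rw [h, log_div hρ.ne' hm.ne', log_mul (by positivity) hθtr.ne']
  field_simp
  ring

theorem f6_entropy_density (m δ kb : ℝ) (hm : 0 < m) (hδ : 0 < δ) (hkb : 0 < kb) :
    ∃ c : ℝ, ∀ ρ θtr θin : ℝ, 0 < ρ → 0 < θtr → 0 < θin →
      (-kb * ∫ C : EuclideanSpace ℝ (Fin 3), ∫ I in Set.Ioi (0 : ℝ),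
          (ρ / m * (2 * Real.pi * θtr) ^ (-(3 : ℝ) / 2) * Real.exp (-‖C‖ ^ 2 / (2 * θtr)) *
            (1 / Real.Gamma (δ / 2)) * I ^ (δ / 2 - 1) * θin ^ (-(δ / 2)) * Real.exp (-I / θin)) *
          Real.log ((ρ / m * (2 * Real.pi * θtr) ^ (-(3 : ℝ) / 2) *
            Real.exp (-‖C‖ ^ 2 / (2 * θtr)) * (1 / Real.Gamma (δ / 2)) * I ^ (δ / 2 - 1) *
            θin ^ (-(δ / 2)) * Real.exp (-I / θin)) / I ^ (δ / 2 - 1)))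
      = kb * ρ / m *
          (3 / 2 * Real.log θtr + δ / 2 * Real.log θin - Real.log ρ + c) :=
  f6_entropy_density_general m δ kb hm hδ
end

section
/- For δ > 0 and accommodation coefficient χ ∈ [0, 2), the Onsager matrix with entries η11 = c(4+δ)/2, η12 = c/2, η22 = c[((15+4δ)/(2δ))·((3+δ)/(5+δ)) + 1/(3+δ)], where c = (χ/(2−χ))·p·√(2/(πθ)) with p, θ > 0, is symmetric positive semidefinite. -/
/-!
The matrix is `c • !![(4 + δ)/2, 1/2; 1/2, η₂₂]` with `c ≥ 0`, and a symmetric `2 × 2` matrix with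
nonnegative diagonal and nonnegative determinant is positive semidefinite (complete the square).
The determinant condition `1/4 ≤ (4 + δ)/2 · η₂₂` holds with room to spare, since `(4 + δ)/2 ≥ 2`
and `η₂₂ ≥ 1/2`.
-/

open Matrix

theorem binary_quadratic_nonneg_of_sq_le_mul {R : Type*} [CommRing R] [LinearOrder R]
    [IsStrictOrderedRing R] {a b d : R} (ha : 0 ≤ a) (hd : 0 ≤ d) (hb : b ^ 2 ≤ a * d) (x y : R) :
    0 ≤ a * x ^ 2 + 2 * b * x * y + d * y ^ 2 := by
  rcases ha.eq_or_lt with rfl | ha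
  · obtain rfl : b = 0 := by nlinarith [sq_nonneg b]
    simpa using mul_nonneg hd (sq_nonneg y)
  · refine nonneg_of_mul_nonneg_right ?_ ha
    have hsq : a * (a * x ^ 2 + 2 * b * x * y + d * y ^ 2) =
        (a * x + b * y) ^ 2 + (a * d - b ^ 2) * y ^ 2 := by ring
    have hdet : 0 ≤ a * d - b ^ 2 := sub_nonneg.2 hb
    rw [hsq]
    positivity

theorem Matrix.posSemidef_fin_two_of_sq_le_mul {R : Type*} [CommRing R] [LinearOrder R]
    [IsStrictOrderedRing R] [StarRing R] [TrivialStar R] [StarOrderedRing R]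
    {a b d : R} (ha : 0 ≤ a) (hd : 0 ≤ d) (hb : b ^ 2 ≤ a * d) :
    (!![a, b; b, d] : Matrix (Fin 2) (Fin 2) R).PosSemidef := by
  refine .of_dotProduct_mulVec_nonneg ?_ fun v => ?_
  · ext i j
    fin_cases i <;> fin_cases j <;> simp
  · convert binary_quadratic_nonneg_of_sq_le_mul ha hd hb (v 0) (v 1) using 1
    simp only [dotProduct, Pi.star_apply, star_trivial, mulVec, of_apply, cons_val',
      cons_val_fin_one, Fin.sum_univ_two, cons_val_zero, cons_val_one]
    ring

theorem one_half_le_onsager_eta22 {δ : ℝ} (hδ : 0 < δ) :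
    1 / 2 ≤ (15 + 4 * δ) / (2 * δ) * ((3 + δ) / (5 + δ)) + 1 / (3 + δ) := by
  have hfirst : 1 / 2 ≤ (15 + 4 * δ) / (2 * δ) * ((3 + δ) / (5 + δ)) := by
    rw [div_mul_div_comm, le_div_iff₀ (by positivity)]
    nlinarith
  have hsecond : 0 ≤ 1 / (3 + δ) := by positivity
  linarith

theorem onsager_matrix_psd_general (δ χ p θ : ℝ) (hδ : 0 < δ) (hχ0 : 0 ≤ χ) (hχ2 : χ < 2)
    (hp : 0 < p) :
    (!![χ / (2 - χ) * p * Real.sqrt (2 / (Real.pi * θ)) * ((4 + δ) / 2),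
        χ / (2 - χ) * p * Real.sqrt (2 / (Real.pi * θ)) * (1 / 2);
        χ / (2 - χ) * p * Real.sqrt (2 / (Real.pi * θ)) * (1 / 2),
        χ / (2 - χ) * p * Real.sqrt (2 / (Real.pi * θ)) *
          ((15 + 4 * δ) / (2 * δ) * ((3 + δ) / (5 + δ)) + 1 / (3 + δ))] :
      Matrix (Fin 2) (Fin 2) ℝ).PosSemidef := by
  set c := χ / (2 - χ) * p * Real.sqrt (2 / (Real.pi * θ))
  set η22 := (15 + 4 * δ) / (2 * δ) * ((3 + δ) / (5 + δ)) + 1 / (3 + δ)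
  have hc : 0 ≤ c := by
    have : 0 < 2 - χ := by linarith
    positivity
  have hη22 : 1 / 2 ≤ η22 := one_half_le_onsager_eta22 hδ
  have hdet : (1 / 2) ^ 2 ≤ (4 + δ) / 2 * η22 := by nlinarith
  simpa only [smul_of, smul_cons, smul_eq_mul, smul_empty] using
    (posSemidef_fin_two_of_sq_le_mul (by positivity) (by linarith) hdet).smul hc

theorem onsager_matrix_psd (δ χ p θ : ℝ) (hδ : 0 < δ) (hχ0 : 0 ≤ χ) (hχ2 : χ < 2)
    (hp : 0 < p) (hθ : 0 < θ) :
    (!![χ / (2 - χ) * p * Real.sqrt (2 / (Real.pi * θ)) * ((4 + δ) / 2),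
        χ / (2 - χ) * p * Real.sqrt (2 / (Real.pi * θ)) * (1 / 2);
        χ / (2 - χ) * p * Real.sqrt (2 / (Real.pi * θ)) * (1 / 2),
        χ / (2 - χ) * p * Real.sqrt (2 / (Real.pi * θ)) *
          ((15 + 4 * δ) / (2 * δ) * ((3 + δ) / (5 + δ)) + 1 / (3 + δ))] :
      Matrix (Fin 2) (Fin 2) ℝ).PosSemidef :=
  onsager_matrix_psd_general δ χ p θ hδ hχ0 hχ2 hp
end
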